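/- Let a : ℝ^{n-k+1} → M_k(ℝ^n) be a polynomial matrix map with rank a(x) ≥ k−1 for all x, and suppose m(x) ≠ 0 whenever x lies in the common zero set of the k×k minors, where m(x) is the determinant of the (k−1)×(k−1) submatrix of a(x) formed by rows 1,...,k−1 and columns 2,...,k. Then every zero (β,x) of ã(β,x) = Σᵢβᵢaᵢ(x) on S^{k-1} × ℝ^{n-k+1} satisfies β₁ ≠ 0. -/

import Mathlib

/-!
If `β₁ = 0`, then `a(x) β = 0` with `β ≠ 0`, so every `k × k` minor of `a(x)` vanishes and hence
`m(x) ≠ 0`. But `(β₂, …, β_k)` is a kernel vector of the block defining `m(x)`, so it vanishes too,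
and `β = 0` contradicts `‖β‖ = 1`.
-/

namespace Matrix

variable {R m n ι : Type*} [CommRing R] [IsDomain R] [Fintype n]

theorem det_submatrix_eq_zero_of_mulVec_eq_zero [DecidableEq n]
    {A : Matrix m n R} {v : n → R} (hAv : A *ᵥ v = 0) (hv : v ≠ 0) (r : n → m) :
    (A.submatrix r id).det = 0 :=
  exists_mulVec_eq_zero_iff.mp ⟨v, hv, by
    ext i
    simpa [mulVec] using congrFun hAv (r i)⟩

theorem eq_zero_of_mulVec_eq_zero_of_det_submatrix_ne_zero [Fintype ι] [DecidableEq ι]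
    {A : Matrix m n R} {v : n → R} (hAv : A *ᵥ v = 0) {r : ι → m} {c : ι → n}
    (hc : Function.Injective c) (hsupp : ∀ j ∉ Set.range c, v j = 0)
    (hdet : (A.submatrix r c).det ≠ 0) : v = 0 := by
  have hvc : v ∘ c = 0 := by
    refine eq_zero_of_mulVec_eq_zero hdet (funext fun i => ?_)
    have hrow := congrFun hAv (r i)
    simp only [mulVec, dotProduct, Pi.zero_apply] at hrow ⊢
    rw [← hrow]
    exact Fintype.sum_of_injective c hc _ _ (fun j hj => by simp [hsupp j hj]) fun _ => rfl
  funext j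
  by_cases hj : j ∈ Set.range c
  · obtain ⟨t, rfl⟩ := hj
    exact congrFun hvc t
  · exact hsupp j hj

end Matrix

open Metric

/-- For a polynomial matrix map `a : ℝ^{n-k+1} → M_k(ℝ^n)` with
`rank a(x) ≥ k-1` everywhere, such that the minor `m(x)` (rows `1,…,k-1`, columns
`2,…,k`, here 0-indexed rows `0,…,k-2`, columns `1,…,k-1`) is nonzero on the common zero
set of the `k×k` minors, every zero `(β,x)` of `ã` with `β ∈ S^{k-1}` has `β₁ ≠ 0`. -/
theorem stmt10 (n k : ℕ) (hk : 2 ≤ k) (hkn : k < n)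
    (a : EuclideanSpace ℝ (Fin (n - k + 1)) → Matrix (Fin n) (Fin k) ℝ)
    (m : EuclideanSpace ℝ (Fin (n - k + 1)) → ℝ)
    (hm : ∀ x, m x = ((a x).submatrix
      (fun t : Fin (k - 1) => (⟨t, by omega⟩ : Fin n))
      (fun t : Fin (k - 1) => (⟨1 + t, by omega⟩ : Fin k))).det)
    (hmV : ∀ x, (∀ r : Fin k → Fin n, Function.Injective r →
      ((a x).submatrix r id).det = 0) → m x ≠ 0)
    (atilde : EuclideanSpace ℝ (Fin k) → EuclideanSpace ℝ (Fin (n - k + 1)) →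
      EuclideanSpace ℝ (Fin n))
    (hatilde : ∀ β x j, atilde β x j = ∑ i : Fin k, β i * a x j i)
    (β : EuclideanSpace ℝ (Fin k)) (hβ : β ∈ sphere (0 : EuclideanSpace ℝ (Fin k)) 1)
    (x : EuclideanSpace ℝ (Fin (n - k + 1))) (hzero : atilde β x = 0) :
    β ⟨0, by omega⟩ ≠ 0 := by
  intro hβ₀
  have hβ_ne : WithLp.ofLp β ≠ 0 := fun h =>
    ne_zero_of_mem_unit_sphere ⟨β, hβ⟩ (WithLp.ofLp_injective 2 (by simpa using h))
  have hker : (a x).mulVec (WithLp.ofLp β) = 0 := by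
    ext j
    simpa [Matrix.mulVec, dotProduct, mul_comm, hatilde] using congr($hzero j)
  have hmx := hmV x fun r _ => Matrix.det_submatrix_eq_zero_of_mulVec_eq_zero hker hβ_ne r
  rw [hm] at hmx
  refine hβ_ne (Matrix.eq_zero_of_mulVec_eq_zero_of_det_submatrix_ne_zero hker
    (fun s t h => Fin.ext (by simpa using congr(Fin.val $h))) (fun j hj => ?_) hmx)
  have hj₀ : (j : ℕ) = 0 := by
    by_contra h0
    exact hj ⟨⟨j - 1, by omega⟩, Fin.ext (by dsimp only; omega)⟩
  rwa [show j = ⟨0, by omega⟩ from Fin.ext hj₀]
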